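/- Let R be a commutative ring, S a multiplicatively closed subset of R, and M a faithful multiplication R-module. If N and K are weakly S-prime submodules of M neither of which is an S-prime submodule of M, then there exists s ∈ S such that s•(N·K) = 0, where N·K = (N :_R M)(K :_R M)•M. -/
import Mathlib


/-- A submodule `N` of an `R`-module `M` is *weakly `S`-prime* (for a multiplicatively
closed subset `S ⊆ R`) if `(N :_R M) ∩ S = ∅` and there exists `s ∈ S` such that for all
`a ∈ R` and `m ∈ M` with `0 ≠ a • m ∈ N`, either `s * a ∈ (N :_R M)` or `s • m ∈ N`. -/
def IsWeaklySPrime {R M : Type*} [CommRing R] [AddCommGroup M] [Module R M]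
    (S : Set R) (N : Submodule R M) : Prop :=
  ((N.colon ⊤ : Set R) ∩ S = ∅) ∧
    ∃ s ∈ S, ∀ (a : R) (m : M), a • m ∈ N → a • m ≠ 0 →
      s * a ∈ N.colon ⊤ ∨ s • m ∈ N

/-- A submodule `N` of an `R`-module `M` is *`S`-prime* if `(N :_R M) ∩ S = ∅` and there
exists `s ∈ S` such that for all `a ∈ R` and `m ∈ M` with `a • m ∈ N`, either
`s * a ∈ (N :_R M)` or `s • m ∈ N`. -/
def IsSPrime {R M : Type*} [CommRing R] [AddCommGroup M] [Module R M]
    (S : Set R) (N : Submodule R M) : Prop :=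
  ((N.colon ⊤ : Set R) ∩ S = ∅) ∧
    ∃ s ∈ S, ∀ (a : R) (m : M), a • m ∈ N →
      s * a ∈ N.colon ⊤ ∨ s • m ∈ N

/-- The product of two submodules `N`, `K` of a multiplication module `M`:
`N·K = (N :_R M)(K :_R M)•M`. -/
def submoduleProd {R M : Type*} [CommRing R] [AddCommGroup M] [Module R M]
    (N K : Submodule R M) : Submodule R M :=
  (N.colon ⊤ * K.colon ⊤) • (⊤ : Submodule R M)

section Aux

variable {R M : Type*} [CommRing R] [AddCommGroup M] [Module R M]

lemma mem_colon_top (N : Submodule R M) (r : R) :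
    r ∈ N.colon ⊤ ↔ ∀ x : M, r • x ∈ N := by
  simp [Submodule.mem_colon]

lemma idealKey (P Q : Ideal R) (s₁ s₂ : R)
    (wP : ∀ u v : R, u * v ∈ P → u * v ≠ 0 → s₁ * u ∈ P ∨ s₁ * v ∈ P)
    (wQ : ∀ u v : R, u * v ∈ Q → u * v ≠ 0 → s₂ * u ∈ Q ∨ s₂ * v ∈ Q)
    (a b : R) (hab : a * b ∈ P) (ha : s₁ * a ∉ P) (hb : s₁ * b ∉ P)
    (c d : R) (hcd : c * d ∈ Q) (hc : s₂ * c ∉ Q) (hd : s₂ * d ∉ Q) :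
    ∀ p ∈ P, ∀ q ∈ Q, s₁ * s₂ * (p * q) = 0 := by
  have hab0 : a * b = 0 := by
    by_contra h
    rcases wP a b hab h with h' | h'
    · exact ha h'
    · exact hb h'
  have haP : ∀ p ∈ P, a * p = 0 := by
    intro p hp
    by_contra hne
    have heq : a * (b + p) = a * p := by rw [mul_add, hab0, zero_add]
    have hmem : a * (b + p) ∈ P := heq ▸ P.mul_mem_left a hp
    rcases wP a (b + p) hmem (heq ▸ hne) with h | h
    · exact ha h
    · apply hb
      have h2 : s₁ * b = s₁ * (b + p) - s₁ * p := by ring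
      rw [h2]; exact P.sub_mem h (P.mul_mem_left s₁ hp)
  have hPb : ∀ p ∈ P, p * b = 0 := by
    intro p hp
    by_contra hne
    have heq : (a + p) * b = p * b := by rw [add_mul, hab0, zero_add]
    have hmem : (a + p) * b ∈ P := heq ▸ P.mul_mem_right b hp
    rcases wP (a + p) b hmem (heq ▸ hne) with h | h
    · apply ha
      have h2 : s₁ * a = s₁ * (a + p) - s₁ * p := by ring
      rw [h2]; exact P.sub_mem h (P.mul_mem_left s₁ hp)
    · exact hb h
  have hP2 : ∀ p ∈ P, ∀ p' ∈ P, p * p' = 0 := by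
    intro p hp p' hp'
    by_contra hne
    have heq : (a + p) * (b + p') = p * p' := by
      have h1 := haP p' hp'
      have h2 := hPb p hp
      calc (a + p) * (b + p') = a * b + a * p' + p * b + p * p' := by ring
        _ = p * p' := by rw [hab0, h1, h2]; ring
    have hmem : (a + p) * (b + p') ∈ P := heq ▸ P.mul_mem_left p hp'
    rcases wP (a + p) (b + p') hmem (heq ▸ hne) with h | h
    · apply ha
      have h2 : s₁ * a = s₁ * (a + p) - s₁ * p := by ring
      rw [h2]; exact P.sub_mem h (P.mul_mem_left s₁ hp)
    · apply hb
      have h2 : s₁ * b = s₁ * (b + p') - s₁ * p' := by ring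
      rw [h2]; exact P.sub_mem h (P.mul_mem_left s₁ hp')
  have hQ2 : ∀ q ∈ Q, ∀ q' ∈ Q, q * q' = 0 := by
    have hcd0 : c * d = 0 := by
      by_contra h
      rcases wQ c d hcd h with h' | h'
      · exact hc h'
      · exact hd h'
    have hcQ : ∀ q ∈ Q, c * q = 0 := by
      intro q hq
      by_contra hne
      have heq : c * (d + q) = c * q := by rw [mul_add, hcd0, zero_add]
      have hmem : c * (d + q) ∈ Q := heq ▸ Q.mul_mem_left c hq
      rcases wQ c (d + q) hmem (heq ▸ hne) with h | h
      · exact hc h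
      · apply hd
        have h2 : s₂ * d = s₂ * (d + q) - s₂ * q := by ring
        rw [h2]; exact Q.sub_mem h (Q.mul_mem_left s₂ hq)
    have hQd : ∀ q ∈ Q, q * d = 0 := by
      intro q hq
      by_contra hne
      have heq : (c + q) * d = q * d := by rw [add_mul, hcd0, zero_add]
      have hmem : (c + q) * d ∈ Q := heq ▸ Q.mul_mem_right d hq
      rcases wQ (c + q) d hmem (heq ▸ hne) with h | h
      · apply hc
        have h2 : s₂ * c = s₂ * (c + q) - s₂ * q := by ring
        rw [h2]; exact Q.sub_mem h (Q.mul_mem_left s₂ hq)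
      · exact hd h
    intro q hq q' hq'
    by_contra hne
    have heq : (c + q) * (d + q') = q * q' := by
      have h1 := hcQ q' hq'
      have h2 := hQd q hq
      calc (c + q) * (d + q') = c * d + c * q' + q * d + q * q' := by ring
        _ = q * q' := by rw [hcd0, h1, h2]; ring
    have hmem : (c + q) * (d + q') ∈ Q := heq ▸ Q.mul_mem_left q hq'
    rcases wQ (c + q) (d + q') hmem (heq ▸ hne) with h | h
    · apply hc
      have h2 : s₂ * c = s₂ * (c + q) - s₂ * q := by ring
      rw [h2]; exact Q.sub_mem h (Q.mul_mem_left s₂ hq)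
    · apply hd
      have h2 : s₂ * d = s₂ * (d + q') - s₂ * q' := by ring
      rw [h2]; exact Q.sub_mem h (Q.mul_mem_left s₂ hq')
  have SL : ∀ e : R, s₁ * e ∉ P → ∀ p ∈ P, ∀ q : R, s₂ * (e * q) = 0 →
      s₁ * s₂ * (p * q) = 0 := by
    intro e he p hp q h0
    by_cases hqe : s₁ * (s₂ * q) ∈ P
    · have h := hP2 _ hqe p hp
      linear_combination h
    · by_cases hz : (s₂ * q) * (e + p) = 0
      · linear_combination s₁ * hz - s₁ * h0
      · have heq : (s₂ * q) * (e + p) = s₂ * (e * q) + (s₂ * q) * p := by ring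
        have hmem : (s₂ * q) * (e + p) ∈ P := by
          rw [heq, h0, zero_add]; exact P.mul_mem_left _ hp
        rcases wP _ _ hmem hz with h | h
        · exact absurd h hqe
        · exact absurd (by
            have h2 : s₁ * e = s₁ * (e + p) - s₁ * p := by ring
            rw [h2]; exact P.sub_mem h (P.mul_mem_left s₁ hp)) he
  intro p hp q hq
  by_cases h1 : s₂ * a ∈ Q
  · refine SL a ha p hp q ?_
    have h := hQ2 _ h1 q hq
    linear_combination h
  · by_cases h2 : s₂ * b ∈ Q
    · refine SL b hb p hp q ?_
      have h := hQ2 _ h2 q hq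
      linear_combination h
    · have haq : a * q = 0 := by
        by_contra hne
        have heq : a * (b + q) = a * q := by rw [mul_add, hab0, zero_add]
        have hmem : a * (b + q) ∈ Q := heq ▸ Q.mul_mem_left a hq
        rcases wQ a (b + q) hmem (heq ▸ hne) with h | h
        · exact h1 h
        · apply h2
          have hh : s₂ * b = s₂ * (b + q) - s₂ * q := by ring
          rw [hh]; exact Q.sub_mem h (Q.mul_mem_left s₂ hq)
      exact SL a ha p hp q (by rw [haq, mul_zero])

end Aux

section Aux2

variable {R M : Type*} [CommRing R] [AddCommGroup M] [Module R M]

/-- From a weakly S-prime submodule of a faithful module, the colon ideal is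
weakly S-prime as an ideal. -/
lemma colon_weakly (hfaithful : ∀ r : R, (∀ m : M, r • m = 0) → r = 0)
    (S : Set R) (N : Submodule R M) (s₁ : R)
    (hw : ∀ (a : R) (m : M), a • m ∈ N → a • m ≠ 0 →
      s₁ * a ∈ N.colon ⊤ ∨ s₁ • m ∈ N) :
    ∀ u v : R, u * v ∈ N.colon ⊤ → u * v ≠ 0 →
      s₁ * u ∈ N.colon ⊤ ∨ s₁ * v ∈ N.colon ⊤ := by
  intro u v huv hne
  have hx₀ : ∃ x₀ : M, (u * v) • x₀ ≠ 0 := by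
    by_contra h
    push_neg at h
    exact hne (hfaithful _ h)
  obtain ⟨x₀, hx₀⟩ := hx₀
  by_cases h : s₁ * u ∈ N.colon ⊤
  · exact Or.inl h
  · right
    have key : ∀ y : M, (u * v) • y ≠ 0 → s₁ • (v • y) ∈ N := by
      intro y hy
      have hin : u • (v • y) ∈ N := by
        rw [smul_smul]
        exact (mem_colon_top N (u * v)).mp huv y
      rcases hw u (v • y) hin (by rw [smul_smul]; exact hy) with h' | h'
      · exact absurd h' h
      · exact h'
    rw [mem_colon_top]
    intro x
    by_cases hx : (u * v) • x = 0
    · have h1 : (u * v) • (x + x₀) ≠ 0 := by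
        rw [smul_add, hx, zero_add]; exact hx₀
      have h2 := key (x + x₀) h1
      have h3 := key x₀ hx₀
      have h4 : (s₁ * v) • x = s₁ • (v • (x + x₀)) - s₁ • (v • x₀) := by
        rw [smul_add, smul_add, mul_smul]; abel
      rw [h4]
      exact N.sub_mem h2 h3
    · rw [mul_smul]
      exact key x hx
end Aux2

section Aux3

variable {R M : Type*} [CommRing R] [AddCommGroup M] [Module R M]

lemma colon_counterexample
    (hmult : ∀ P : Submodule R M, ∃ I : Ideal R, P = I • (⊤ : Submodule R M))
    (S : Set R) (N : Submodule R M)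
    (hN : IsWeaklySPrime S N) (hNnot : ¬ IsSPrime S N) :
    ∀ s ∈ S, ∃ a v : R, a * v ∈ N.colon ⊤ ∧ s * a ∉ N.colon ⊤ ∧ s * v ∉ N.colon ⊤ := by
  intro s hs
  have hne : ¬ ∃ s ∈ S, ∀ (a : R) (m : M), a • m ∈ N →
      s * a ∈ N.colon ⊤ ∨ s • m ∈ N := fun h => hNnot ⟨hN.1, h⟩
  push_neg at hne
  obtain ⟨a, m, hm, hsa, hsm⟩ := hne s hs
  obtain ⟨c, hc⟩ := hmult (Submodule.span R {m})
  have hv : ∃ v ∈ c, s * v ∉ N.colon ⊤ := by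
    by_contra h
    push_neg at h
    apply hsm
    have hmmem : m ∈ c • (⊤ : Submodule R M) :=
      hc ▸ Submodule.mem_span_singleton_self m
    refine Submodule.smul_induction_on hmmem ?_ ?_
    · intro r hr n _
      rw [smul_smul]
      exact (mem_colon_top N (s * r)).mp (h r hr) n
    · intro x y hx hy
      rw [smul_add]
      exact N.add_mem hx hy
  obtain ⟨v, hvc, hsv⟩ := hv
  refine ⟨a, v, ?_, hsa, hsv⟩
  rw [mem_colon_top]
  intro x
  have hvx : v • x ∈ Submodule.span R {m} := by
    rw [hc]
    exact Submodule.smul_mem_smul hvc Submodule.mem_top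
  obtain ⟨r, hr⟩ := Submodule.mem_span_singleton.mp hvx
  rw [mul_smul, ← hr, smul_comm a r m]
  exact N.smul_mem r hm

end Aux3

theorem stmt11 {R M : Type*} [CommRing R] [Nontrivial R] [AddCommGroup M] [Module R M]
    (S : Set R) (hS : ∀ a ∈ S, ∀ b ∈ S, a * b ∈ S)
    (hfaithful : ∀ r : R, (∀ m : M, r • m = 0) → r = 0)
    (hmult : ∀ P : Submodule R M, ∃ I : Ideal R, P = I • (⊤ : Submodule R M))
    (N K : Submodule R M)
    (hN : IsWeaklySPrime S N) (hNnot : ¬ IsSPrime S N)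
    (hK : IsWeaklySPrime S K) (hKnot : ¬ IsSPrime S K) :
    ∃ s ∈ S, ∀ x ∈ submoduleProd N K, s • x = 0 := by
  obtain ⟨hNdisj, s₁, hs₁S, hw₁⟩ := hN
  obtain ⟨hKdisj, s₂, hs₂S, hw₂⟩ := hK
  have wP := colon_weakly hfaithful S N s₁ hw₁
  have wQ := colon_weakly hfaithful S K s₂ hw₂
  obtain ⟨a, b, hab, ha, hb⟩ :=
    colon_counterexample hmult S N ⟨hNdisj, s₁, hs₁S, fun a m hm hne => hw₁ a m hm hne⟩
      hNnot s₁ hs₁S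
  obtain ⟨c, d, hcd, hc, hd⟩ :=
    colon_counterexample hmult S K ⟨hKdisj, s₂, hs₂S, fun a m hm hne => hw₂ a m hm hne⟩
      hKnot s₂ hs₂S
  have key := idealKey (N.colon ⊤) (K.colon ⊤) s₁ s₂ wP wQ a b hab ha hb c d hcd hc hd
  refine ⟨s₁ * s₂, hS _ hs₁S _ hs₂S, ?_⟩
  intro x hx
  have hr0 : ∀ r ∈ (N.colon ⊤) * (K.colon ⊤), s₁ * s₂ * r = 0 := by
    intro r hr
    refine Submodule.mul_induction_on hr ?_ ?_
    · intro p hp q hq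
      exact key p hp q hq
    · intro x y hx hy
      rw [mul_add, hx, hy, add_zero]
  unfold submoduleProd at hx
  refine Submodule.smul_induction_on hx ?_ ?_
  · intro r hr n _
    rw [smul_smul, hr0 r hr, zero_smul]
  · intro x y hx hy
    rw [smul_add, hx, hy, add_zero]
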